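/- (Factorization of the magnetic N_f = 2 index.) Let q, a, v be complex numbers with 0 < |q| < 1, |q| < |a| < 1, v ≠ 0, and suppose that none of v², av², a/v² is an integer power of q. Then [(av², a/v²; q)_∞ / (qv²/a, q/(av²); q)_∞] · Σ_{k∈ℤ} (q/a)^{|k|} · [(q^{1+|k|}, q^{1+|k|}v², q/a, q/(av²); q)_∞ / (v^{−2}, aq^{|k|}, aq^{|k|}v², q; q)_∞] · Σ_{n=0}^∞ [(aq^{|k|}, aq^{|k|}v², a, av²; q)_n / (q^{1+|k|}, q^{1+|k|}v², qv², q; q)_n] (q/a)^{2n} = (a/v², qv², q/a; q)_∞ / (qv²/a, v^{−2}, a; q)_∞ · [₂φ₁(av², a; qv²; q, q/a)]². -/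

import Mathlib

open scoped BigOperators

/-- The infinite q-Pochhammer symbol `(z;q)_∞ = ∏_{j=0}^∞ (1 - z q^j)`. -/
noncomputable def qPochInf (z q : ℂ) : ℂ := ∏' j : ℕ, (1 - z * q ^ j)

/-- The q-Pochhammer symbol `(z;q)_n = (z;q)_∞ / (z q^n;q)_∞` for `n : ℤ`. -/
noncomputable def qPochInt (z q : ℂ) (n : ℤ) : ℂ :=
  qPochInf z q / qPochInf (z * q ^ n) q

/-- The basic hypergeometric series `₂φ₁(A,B;C;q,Z)`. -/
noncomputable def phi21 (A B C q Z : ℂ) : ℂ :=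
  ∑' n : ℕ, (qPochInt A q n * qPochInt B q n) /
    (qPochInt q q n * qPochInt C q n) * Z ^ n

/-!
The `k`-th summand on the left is `R · ∑ₙ Tₙ T_{n+|k|}`, where `Tₙ` is the `n`-th term of
`₂φ₁(av², a; qv²; q, q/a)` and `R` is the prefactor on the right: the prefactor of the `k`-th
summand equals `R · T_{|k|}` once `(q/(av²), a, qv²; q)_∞` cancel, and the `n`-th term of its
inner series is `Tₙ` times the factor `T_{|k|+n} / T_{|k|}` (split `(x;q)_{|k|+n}` at `|k|`).
As `(m, n) ↦ (m - n, min m n)` is a bijection `ℕ × ℕ ≃ ℤ × ℕ`, the double sum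
`∑ₖ ∑ₙ Tₙ T_{n+|k|}` is the Cauchy square `(∑ₙ Tₙ)²`; the terms are absolutely summable since
`|q/a| < 1` and `(x;q)ₙ`, `(x;q)ₙ⁻¹` stay bounded in `n`.
-/

open Finset

lemma mul_pow_ne_one_of_norm_lt_one {z q : ℂ} (hz : ‖z‖ < 1) (hq : ‖q‖ ≤ 1) (j : ℕ) :
    z * q ^ j ≠ 1 := by
  refine ne_of_apply_ne norm (ne_of_lt ?_)
  rw [norm_one, norm_mul, norm_pow]
  exact (mul_le_of_le_one_right (norm_nonneg z) (pow_le_one₀ (norm_nonneg q) hq)).trans_lt hz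

lemma mul_pow_ne_one_of_forall_ne_zpow {z q : ℂ} (h : ∀ m : ℤ, z ≠ q ^ m) (j : ℕ) :
    z * q ^ j ≠ 1 := fun h₁ =>
  h (-j) (by rw [zpow_neg, zpow_natCast]; exact eq_inv_of_mul_eq_one_left h₁)

lemma div_mul_pow_ne_one_of_forall_ne_zpow {w q : ℂ} (h : ∀ m : ℤ, w ≠ q ^ m) (hw : w ≠ 0)
    (j : ℕ) : q / w * q ^ j ≠ 1 := fun h₁ =>
  h (j + 1 : ℕ) (by
    rw [div_mul_eq_mul_div, div_eq_one_iff_eq hw] at h₁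
    rw [zpow_natCast, ← h₁, pow_succ, mul_comm])

section QPochhammer

variable {z q : ℂ}

lemma summable_norm_mul_pow (hq : ‖q‖ < 1) (z : ℂ) : Summable fun j : ℕ => ‖z * q ^ j‖ := by
  simpa only [norm_mul, norm_pow] using
    (summable_geometric_of_lt_one (norm_nonneg q) hq).mul_left ‖z‖

lemma multipliable_one_sub_mul_pow (hq : ‖q‖ < 1) (z : ℂ) :
    Multipliable fun j : ℕ => 1 - z * q ^ j := by
  simpa only [sub_eq_add_neg] using
    multipliable_one_add_of_summable (f := fun j => -(z * q ^ j))
      (by simpa only [norm_neg] using summable_norm_mul_pow hq z)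

lemma qPochInf_ne_zero (hq : ‖q‖ < 1) (hz : ∀ j : ℕ, z * q ^ j ≠ 1) : qPochInf z q ≠ 0 := by
  simpa only [qPochInf, sub_eq_add_neg] using
    tprod_one_add_ne_zero_of_summable (f := fun j : ℕ => -(z * q ^ j))
      (fun j => by simpa only [← sub_eq_add_neg, sub_ne_zero] using (hz j).symm)
      (by simpa only [norm_neg] using summable_norm_mul_pow hq z)

lemma qPochInf_mul_pow_ne_zero (hq : ‖q‖ < 1) (hz : ∀ j : ℕ, z * q ^ j ≠ 1) (k : ℕ) :
    qPochInf (z * q ^ k) q ≠ 0 :=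
  qPochInf_ne_zero hq fun j => by rw [mul_assoc, ← pow_add]; exact hz (k + j)

lemma qPochInf_eq_prod_mul (hq : ‖q‖ < 1) (z : ℂ) (n : ℕ) :
    qPochInf z q = (∏ j ∈ range n, (1 - z * q ^ j)) * qPochInf (z * q ^ n) q := by
  have hshift : (fun j : ℕ => 1 - z * q ^ (j + n)) = fun j => 1 - z * q ^ n * q ^ j := by
    ext j; ring
  rw [qPochInf, qPochInf, ← hshift, ← Multipliable.prod_mul_tprod_nat_mul' (k := n)]
  simpa only [hshift] using multipliable_one_sub_mul_pow hq (z * q ^ n)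

lemma qPochInt_natCast_eq_prod (hq : ‖q‖ < 1) {n : ℕ} (h : qPochInf (z * q ^ n) q ≠ 0) :
    qPochInt z q n = ∏ j ∈ range n, (1 - z * q ^ j) := by
  rw [qPochInt, zpow_natCast, qPochInf_eq_prod_mul hq z n, mul_div_cancel_right₀ _ h]

lemma qPochInt_add {m : ℕ} (h : qPochInf (z * q ^ m) q ≠ 0) (n : ℕ) :
    qPochInt z q (m + n : ℕ) = qPochInt z q m * qPochInt (z * q ^ m) q n := by
  simp only [qPochInt, zpow_natCast, pow_add, ← mul_assoc, div_mul_div_cancel₀ h]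

lemma norm_prod_one_sub_mul_pow_le (hq : ‖q‖ < 1) (z : ℂ) (n : ℕ) :
    ‖∏ j ∈ range n, (1 - z * q ^ j)‖ ≤ Real.exp (‖z‖ / (1 - ‖q‖)) :=
  calc ‖∏ j ∈ range n, (1 - z * q ^ j)‖
      ≤ ∏ j ∈ range n, (1 + ‖z * q ^ j‖) :=
        (Finset.norm_prod_le _ _).trans <| prod_le_prod (fun _ _ => norm_nonneg _)
          fun j _ => (norm_sub_le _ _).trans_eq (by rw [norm_one])
    _ ≤ Real.exp (∑ j ∈ range n, ‖z * q ^ j‖) :=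
        Real.prod_one_add_le_exp_sum _ fun _ => norm_nonneg _
    _ ≤ Real.exp (∑' j, ‖z * q ^ j‖) :=
        Real.exp_le_exp.mpr <| (summable_norm_mul_pow hq z).sum_le_tsum _ fun _ _ => norm_nonneg _
    _ = Real.exp (‖z‖ / (1 - ‖q‖)) := by
        simp only [norm_mul, norm_pow, tsum_mul_left, tsum_geometric_of_lt_one (norm_nonneg q) hq,
          div_eq_mul_inv]

lemma norm_qPochInf_le (hq : ‖q‖ < 1) (z : ℂ) : ‖qPochInf z q‖ ≤ Real.exp (‖z‖ / (1 - ‖q‖)) :=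
  le_of_tendsto' (multipliable_one_sub_mul_pow hq z).hasProd.tendsto_prod_nat.norm
    (norm_prod_one_sub_mul_pow_le hq z)

lemma norm_qPochInt_natCast_le (hq : ‖q‖ < 1) (z : ℂ) (n : ℕ) :
    ‖qPochInt z q n‖ ≤ Real.exp (‖z‖ / (1 - ‖q‖)) := by
  by_cases h : qPochInf (z * q ^ n) q = 0
  · rw [qPochInt, zpow_natCast, h, div_zero, norm_zero]
    positivity
  · rw [qPochInt_natCast_eq_prod hq h]
    exact norm_prod_one_sub_mul_pow_le hq z n

/-- When `(z;q)_∞ = 0`, both sides are `0` by the convention `x / 0 = 0`. -/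
lemma norm_inv_qPochInt_natCast_le (hq : ‖q‖ < 1) (z : ℂ) (n : ℕ) :
    ‖(qPochInt z q n)⁻¹‖ ≤ Real.exp (‖z‖ / (1 - ‖q‖)) / ‖qPochInf z q‖ := by
  rw [qPochInt, inv_div, norm_div, zpow_natCast]
  gcongr
  calc ‖qPochInf (z * q ^ n) q‖ ≤ Real.exp (‖z * q ^ n‖ / (1 - ‖q‖)) := norm_qPochInf_le hq _
    _ ≤ Real.exp (‖z‖ / (1 - ‖q‖)) := by
        have : 0 < 1 - ‖q‖ := by linarith
        gcongr
        rw [norm_mul, norm_pow]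
        exact mul_le_of_le_one_right (norm_nonneg z) (pow_le_one₀ (norm_nonneg q) hq.le)

end QPochhammer

noncomputable def phi21Term (A B C q Z : ℂ) (n : ℕ) : ℂ :=
  (qPochInt A q n * qPochInt B q n) / (qPochInt q q n * qPochInt C q n) * Z ^ n

section Phi21

variable {A B C q Z : ℂ}

lemma phi21_eq_tsum_phi21Term : phi21 A B C q Z = ∑' n, phi21Term A B C q Z n := rfl

lemma summable_norm_phi21Term (hq : ‖q‖ < 1) (hZ : ‖Z‖ < 1) :
    Summable fun n => ‖phi21Term A B C q Z n‖ := by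
  let bound (z : ℂ) : ℝ := Real.exp (‖z‖ / (1 - ‖q‖))
  refine .of_nonneg_of_le (fun _ => norm_nonneg _) (fun n => ?_)
    ((summable_geometric_of_lt_one (norm_nonneg Z) hZ).mul_left
      (bound A * bound B * (bound q / ‖qPochInf q q‖ * (bound C / ‖qPochInf C q‖))))
  rw [phi21Term, div_eq_mul_inv, mul_inv]
  simp only [norm_mul, norm_pow]
  gcongr
  exacts [norm_qPochInt_natCast_le hq A n, norm_qPochInt_natCast_le hq B n,
    norm_inv_qPochInt_natCast_le hq q n, norm_inv_qPochInt_natCast_le hq C n]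

lemma phi21Term_add {k : ℕ} (hA : qPochInf (A * q ^ k) q ≠ 0) (hB : qPochInf (B * q ^ k) q ≠ 0)
    (hq : qPochInf (q * q ^ k) q ≠ 0) (hC : qPochInf (C * q ^ k) q ≠ 0) (n : ℕ) :
    phi21Term A B C q Z (k + n) = phi21Term A B C q Z k *
      ((qPochInt (A * q ^ k) q n * qPochInt (B * q ^ k) q n) /
        (qPochInt (q * q ^ k) q n * qPochInt (C * q ^ k) q n) * Z ^ n) := by
  simp only [phi21Term, qPochInt_add hA, qPochInt_add hB, qPochInt_add hq, qPochInt_add hC, pow_add]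
  ring

end Phi21

def natProdEquivDiffMin : ℕ × ℕ ≃ ℤ × ℕ where
  toFun p := ((p.1 : ℤ) - p.2, min p.1 p.2)
  invFun p := (p.2 + p.1.toNat, p.2 + (-p.1).toNat)
  left_inv p := by ext <;> simp <;> omega
  right_inv p := by ext <;> simp; omega

theorem tsum_int_tsum_mul_add_natAbs {R : Type*} [NormedCommRing R] [CompleteSpace R] {f : ℕ → R}
    (hf : Summable fun n => ‖f n‖) :
    ∑' k : ℤ, ∑' n : ℕ, f n * f (n + k.natAbs) = (∑' n, f n) ^ 2 := by
  have hpair (p : ℤ × ℕ) : f (natProdEquivDiffMin.symm p).1 * f (natProdEquivDiffMin.symm p).2 =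
      f p.2 * f (p.2 + p.1.natAbs) := by
    obtain ⟨k, n⟩ := p
    obtain ⟨K, rfl | rfl⟩ := Int.eq_nat_or_neg k
    · simp [natProdEquivDiffMin, mul_comm]
    · simp [natProdEquivDiffMin]
  have hg : Summable fun p : ℤ × ℕ => f p.2 * f (p.2 + p.1.natAbs) :=
    (natProdEquivDiffMin.symm.summable_iff.mpr (summable_mul_of_summable_norm hf hf)).congr hpair
  rw [sq, tsum_mul_tsum_of_summable_norm hf hf, ← natProdEquivDiffMin.symm.tsum_eq,
    tsum_congr hpair, hg.tsum_prod]

lemma prefactor_eq_mul_phi21Term {q a v : ℂ} (K : ℕ)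
    (h₁ : qPochInf (q / (a * v ^ 2)) q ≠ 0) (h₂ : qPochInf a q ≠ 0)
    (h₃ : qPochInf (q * v ^ 2) q ≠ 0) :
    (qPochInf (a * v ^ 2) q * qPochInf (a / v ^ 2) q) /
        (qPochInf (q * v ^ 2 / a) q * qPochInf (q / (a * v ^ 2)) q) *
      ((q / a) ^ K *
        ((qPochInf (q ^ (1 + K)) q * qPochInf (q ^ (1 + K) * v ^ 2) q *
            qPochInf (q / a) q * qPochInf (q / (a * v ^ 2)) q) /
          (qPochInf (v ^ (-2 : ℤ)) q * qPochInf (a * q ^ K) q *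
            qPochInf (a * q ^ K * v ^ 2) q * qPochInf q q))) =
    (qPochInf (a / v ^ 2) q * qPochInf (q * v ^ 2) q * qPochInf (q / a) q) /
        (qPochInf (q * v ^ 2 / a) q * qPochInf (v ^ (-2 : ℤ)) q * qPochInf a q) *
      phi21Term (a * v ^ 2) a (q * v ^ 2) q (q / a) K := by
  set E := qPochInf (a * v ^ 2) q * qPochInf (a / v ^ 2) q * qPochInf (q / a) q *
      (qPochInf (q ^ (1 + K)) q * qPochInf (q ^ (1 + K) * v ^ 2) q) /
    (qPochInf (q * v ^ 2 / a) q * qPochInf (v ^ (-2 : ℤ)) q * qPochInf q q *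
      (qPochInf (a * q ^ K) q * qPochInf (a * q ^ K * v ^ 2) q)) * (q / a) ^ K with hE
  rw [phi21Term, qPochInt, qPochInt, qPochInt, qPochInt, zpow_natCast,
    show a * v ^ 2 * q ^ K = a * q ^ K * v ^ 2 by ring, show q * q ^ K = q ^ (1 + K) by ring,
    show q * v ^ 2 * q ^ K = q ^ (1 + K) * v ^ 2 by ring]
  calc _ = E * (qPochInf (q / (a * v ^ 2)) q / qPochInf (q / (a * v ^ 2)) q) := by ring
    _ = E * (qPochInf a q / qPochInf a q) * (qPochInf (q * v ^ 2) q / qPochInf (q * v ^ 2) q) := by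
      rw [div_self h₁, div_self h₂, div_self h₃, mul_one, mul_one]
    _ = _ := by
      rw [hE]
      simp only [div_eq_mul_inv, mul_inv, inv_inv]
      ring

theorem magnetic_index_factorization_Nf2_general (q a v : ℂ)
    (hq1 : ‖q‖ < 1)
    (hqa : ‖q‖ < ‖a‖) (ha : ‖a‖ < 1)
    (hv : v ≠ 0)
    (hv2 : ∀ m : ℤ, v ^ 2 ≠ q ^ m)
    (hav2p : ∀ m : ℤ, a * v ^ 2 ≠ q ^ m) :
    (qPochInf (a * v ^ 2) q * qPochInf (a / v ^ 2) q) /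
      (qPochInf (q * v ^ 2 / a) q * qPochInf (q / (a * v ^ 2)) q) *
    (∑' k : ℤ, (q / a) ^ |k| *
      ((qPochInf (q ^ (1 + |k|)) q * qPochInf (q ^ (1 + |k|) * v ^ 2) q *
        qPochInf (q / a) q * qPochInf (q / (a * v ^ 2)) q) /
       (qPochInf (v ^ (-2 : ℤ)) q * qPochInf (a * q ^ |k|) q *
        qPochInf (a * q ^ |k| * v ^ 2) q * qPochInf q q)) *
      ∑' n : ℕ,
        (qPochInt (a * q ^ |k|) q n * qPochInt (a * q ^ |k| * v ^ 2) q n *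
         qPochInt a q n * qPochInt (a * v ^ 2) q n) /
        (qPochInt (q ^ (1 + |k|)) q n * qPochInt (q ^ (1 + |k|) * v ^ 2) q n *
         qPochInt (q * v ^ 2) q n * qPochInt q q n) * (q / a) ^ (2 * n))
    = (qPochInf (a / v ^ 2) q * qPochInf (q * v ^ 2) q * qPochInf (q / a) q) /
      (qPochInf (q * v ^ 2 / a) q * qPochInf (v ^ (-2 : ℤ)) q * qPochInf a q) *
      phi21 (a * v ^ 2) a (q * v ^ 2) q (q / a) ^ 2 := by
  have ha0 : a ≠ 0 := norm_pos_iff.mp ((norm_nonneg q).trans_lt hqa)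
  have hZ : ‖q / a‖ < 1 := by rw [norm_div]; exact (div_lt_one (norm_pos_iff.mpr ha0)).mpr hqa
  have hq : ∀ j : ℕ, q * q ^ j ≠ 1 := mul_pow_ne_one_of_norm_lt_one hq1 hq1.le
  have ha' : ∀ j : ℕ, a * q ^ j ≠ 1 := mul_pow_ne_one_of_norm_lt_one ha hq1.le
  have hav : ∀ j : ℕ, a * v ^ 2 * q ^ j ≠ 1 := mul_pow_ne_one_of_forall_ne_zpow hav2p
  have hqv : ∀ j : ℕ, q * v ^ 2 * q ^ j ≠ 1 := fun j => by
    rw [show q * v ^ 2 * q ^ j = v ^ 2 * q ^ (j + 1) by ring]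
    exact mul_pow_ne_one_of_forall_ne_zpow hv2 _
  have hqav : ∀ j : ℕ, q / (a * v ^ 2) * q ^ j ≠ 1 :=
    div_mul_pow_ne_one_of_forall_ne_zpow hav2p (mul_ne_zero ha0 (pow_ne_zero 2 hv))
  rw [phi21_eq_tsum_phi21Term, ← tsum_int_tsum_mul_add_natAbs (summable_norm_phi21Term hq1 hZ),
    ← tsum_mul_left, ← tsum_mul_left]
  refine tsum_congr fun k => ?_
  rw [Int.abs_eq_natAbs]
  generalize k.natAbs = K
  rw [show (1 + K : ℤ) = ((1 + K : ℕ) : ℤ) by push_cast; rfl]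
  simp only [zpow_natCast]
  rw [← mul_assoc, prefactor_eq_mul_phi21Term K (qPochInf_ne_zero hq1 hqav)
    (qPochInf_ne_zero hq1 ha') (qPochInf_ne_zero hq1 hqv), mul_assoc, ← tsum_mul_left]
  congr 1
  refine tsum_congr fun n => ?_
  rw [add_comm n K, phi21Term_add (qPochInf_mul_pow_ne_zero hq1 hav K)
    (qPochInf_mul_pow_ne_zero hq1 ha' K) (qPochInf_mul_pow_ne_zero hq1 hq K)
    (qPochInf_mul_pow_ne_zero hq1 hqv K),
    show a * v ^ 2 * q ^ K = a * q ^ K * v ^ 2 by ring, show q * q ^ K = q ^ (1 + K) by ring,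
    show q * v ^ 2 * q ^ K = q ^ (1 + K) * v ^ 2 by ring]
  simp only [phi21Term]
  ring

theorem magnetic_index_factorization_Nf2 (q a v : ℂ)
    (hq0 : 0 < ‖q‖) (hq1 : ‖q‖ < 1)
    (hqa : ‖q‖ < ‖a‖) (ha : ‖a‖ < 1)
    (hv : v ≠ 0)
    (hv2 : ∀ m : ℤ, v ^ 2 ≠ q ^ m)
    (hav2p : ∀ m : ℤ, a * v ^ 2 ≠ q ^ m)
    (hav2 : ∀ m : ℤ, a / v ^ 2 ≠ q ^ m) :
    (qPochInf (a * v ^ 2) q * qPochInf (a / v ^ 2) q) /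
      (qPochInf (q * v ^ 2 / a) q * qPochInf (q / (a * v ^ 2)) q) *
    (∑' k : ℤ, (q / a) ^ |k| *
      ((qPochInf (q ^ (1 + |k|)) q * qPochInf (q ^ (1 + |k|) * v ^ 2) q *
        qPochInf (q / a) q * qPochInf (q / (a * v ^ 2)) q) /
       (qPochInf (v ^ (-2 : ℤ)) q * qPochInf (a * q ^ |k|) q *
        qPochInf (a * q ^ |k| * v ^ 2) q * qPochInf q q)) *
      ∑' n : ℕ,
        (qPochInt (a * q ^ |k|) q n * qPochInt (a * q ^ |k| * v ^ 2) q n *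
         qPochInt a q n * qPochInt (a * v ^ 2) q n) /
        (qPochInt (q ^ (1 + |k|)) q n * qPochInt (q ^ (1 + |k|) * v ^ 2) q n *
         qPochInt (q * v ^ 2) q n * qPochInt q q n) * (q / a) ^ (2 * n))
    = (qPochInf (a / v ^ 2) q * qPochInf (q * v ^ 2) q * qPochInf (q / a) q) /
      (qPochInf (q * v ^ 2 / a) q * qPochInf (v ^ (-2 : ℤ)) q * qPochInf a q) *
      phi21 (a * v ^ 2) a (q * v ^ 2) q (q / a) ^ 2 :=
  magnetic_index_factorization_Nf2_general q a v hq1 hqa ha hv hv2 hav2p
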